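/- arXiv:2604.13467 — 2 statements merged into one kernel-verified Lean document; each statement's English description precedes it below -/
import Mathlib

section
/- With Z_n as above, the almost-sure martingale limit Z = lim_n Z_n satisfies E_P(log Z) = h(P), where h(P) = lim_n H(P_n)/n is the entropy rate of P. -/
open MeasureTheory Filter Finset

noncomputable section

variable {A : Type*}

def shift (x : ℕ → A) : ℕ → A := fun n => x (n + 1)

def cyl (x : ℕ → A) (n : ℕ) : Set (ℕ → A) := {y | ∀ i < n, y i = x i}

variable [MeasurableSpace A]

def Zf (P : Measure (ℕ → A)) (n : ℕ) (x : ℕ → A) : ℝ :=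
  (P (cyl (shift x) (n - 1))).toReal / (P (cyl x n)).toReal

def suppP (P : Measure (ℕ → A)) : Set (ℕ → A) := {x | ∀ n, 0 < P (cyl x n)}

def cylW {n : ℕ} (w : Fin n → A) : Set (ℕ → A) := {y | ∀ i : Fin n, y i.val = w i}

def Hn [Fintype A] (P : Measure (ℕ → A)) (n : ℕ) : ℝ :=
  ∑ w : Fin n → A, Real.negMulLog ((P (cylW w)).toReal)

def coordFiltration (A : Type*) [MeasurableSpace A] :
    Filtration ℕ (MeasurableSpace.pi : MeasurableSpace (ℕ → A)) where
  seq n := MeasurableSpace.comap (fun x : ℕ → A => fun i : Fin (n + 1) => x i) MeasurableSpace.pi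
  mono' := by
    intro m n hmn
    have h : (fun x : ℕ → A => fun i : Fin (m + 1) => x i)
        = (fun v : Fin (n + 1) → A => fun i : Fin (m + 1) => v (Fin.castLE (by omega) i))
          ∘ (fun x : ℕ → A => fun i : Fin (n + 1) => x i) := rfl
    show MeasurableSpace.comap _ _ ≤ MeasurableSpace.comap _ _
    rw [h, ← MeasurableSpace.comap_comp]
    exact MeasurableSpace.comap_mono
      ((measurable_pi_lambda _ (fun i => measurable_pi_apply _)).comap_le)
  le' := by
    intro n
    exact (measurable_pi_lambda _ (fun i => measurable_pi_apply i.val)).comap_le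

/-!
Identify the letters of `A` that no measurable set separates, obtaining the finite alphabet
`Atom A`. A cylinder has the same outer measure as the measurable cylinder of atoms it
determines, so `Z_{n+1}(x)` is the ratio of the probabilities of the atom words of
`x₂ … x_{n+1}` and `x₁ … x_{n+1}`, and shift invariance gives
`E log Z_{n+1} = H̄(n+1) - H̄(n)`, where `H̄` is the block entropy of the atom process.
As `E Z_{n+1} ≤ #(Atom A)`, the functions `log Z_n` have a uniformly bounded exponential moment,
hence are uniformly integrable: `E log Z_{n+1} → E log Z`, and by Cesàro `H̄(n) / n → E log Z`.

It remains to see `H(P_n) = H̄(n)`. An atom `γ` containing two letters only matters if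
`0 < P(atom of x₁ = γ) = p < 1`. Then an atom word with `r` occurrences of `γ` is the image of at
least `2^r` words over `A`, each of probability at most `c < 1`, and averaging gives
`H(P_n) ≥ -log c · (n p)² / 2`, which is incompatible with the convergence of `H(P_n) / n`.
-/

open scoped ENNReal NNReal Topology

lemma exists_ofReal_le_min_add_mul_exp {δ : ℝ≥0} (hδ : 0 < δ) : ∃ K : ℝ, ∀ t : ℝ,
    ENNReal.ofReal t ≤
      min (ENNReal.ofReal t) (ENNReal.ofReal K) + δ * ENNReal.ofReal (Real.exp t) := by
  obtain ⟨K, hK⟩ := eventually_atTop.1 ((Real.tendsto_pow_mul_exp_neg_atTop_nhds_zero 1).eventually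
    (ge_mem_nhds (NNReal.coe_pos.2 hδ)))
  refine ⟨K, fun t => ?_⟩
  rcases le_total t K with htK | hKt
  · rw [min_eq_left (ENNReal.ofReal_le_ofReal htK)]
    exact le_self_add
  · refine le_add_left ?_
    rw [← ENNReal.ofReal_coe_nnreal, ← ENNReal.ofReal_mul δ.coe_nonneg]
    refine ENNReal.ofReal_le_ofReal ?_
    calc t = t ^ 1 * Real.exp (-t) * Real.exp t := by
          rw [pow_one, mul_assoc, ← Real.exp_add, neg_add_cancel, Real.exp_zero, mul_one]
      _ ≤ δ * Real.exp t := mul_le_mul_of_nonneg_right (hK t hKt) (Real.exp_pos t).le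

section ExpMoment

variable {Ω : Type*} [MeasurableSpace Ω] {μ : Measure Ω} [IsFiniteMeasure μ]
  {f : ℕ → Ω → ℝ} {g : Ω → ℝ} {C : ℝ≥0}

/-- Fatou gives the lower bound; truncating at a level `K` costs at most `δ * C`. -/
theorem tendsto_lintegral_of_lintegral_exp_le (hf : ∀ n, Measurable (f n))
    (hfg : ∀ᵐ x ∂μ, Tendsto (fun n => f n x) atTop (𝓝 (g x)))
    (hC : ∀ n, ∫⁻ x, ENNReal.ofReal (Real.exp (f n x)) ∂μ ≤ C) :
    Tendsto (fun n => ∫⁻ x, ENNReal.ofReal (f n x) ∂μ) atTop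
      (𝓝 (∫⁻ x, ENNReal.ofReal (g x) ∂μ)) := by
  have hF : ∀ᵐ x ∂μ,
      Tendsto (fun n => ENNReal.ofReal (f n x)) atTop (𝓝 (ENNReal.ofReal (g x))) :=
    hfg.mono fun x hx => ENNReal.tendsto_ofReal hx
  refine tendsto_of_le_liminf_of_limsup_le ?_ ?_
  · calc ∫⁻ x, ENNReal.ofReal (g x) ∂μ
        = ∫⁻ x, liminf (fun n => ENNReal.ofReal (f n x)) atTop ∂μ :=
          lintegral_congr_ae (hF.mono fun x hx => hx.liminf_eq.symm)
      _ ≤ _ := lintegral_liminf_le fun n => (hf n).ennreal_ofReal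
  refine ENNReal.le_of_forall_pos_le_add fun ε hε _ => ?_
  set δ : ℝ≥0 := ε / (C + 1)
  obtain ⟨K, hK⟩ := exists_ofReal_le_min_add_mul_exp (δ := δ) (by positivity)
  set F : ℕ → Ω → ℝ≥0∞ := fun n x => min (ENNReal.ofReal (f n x)) (ENNReal.ofReal K)
  have hFm : ∀ n, Measurable (F n) := fun n => (hf n).ennreal_ofReal.min measurable_const
  have htrunc : Tendsto (fun n => ∫⁻ x, F n x ∂μ) atTop
      (𝓝 (∫⁻ x, min (ENNReal.ofReal (g x)) (ENNReal.ofReal K) ∂μ)) :=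
    tendsto_lintegral_of_dominated_convergence (fun _ => ENNReal.ofReal K) hFm
      (fun n => .of_forall fun x => min_le_right _ _)
      (by simp [lintegral_const, ENNReal.mul_eq_top])
      (hF.mono fun x hx => hx.min tendsto_const_nhds)
  have hbound : ∀ n, ∫⁻ x, ENNReal.ofReal (f n x) ∂μ ≤ ∫⁻ x, F n x ∂μ + δ * C := fun n =>
    calc ∫⁻ x, ENNReal.ofReal (f n x) ∂μ
        ≤ ∫⁻ x, (F n x + δ * ENNReal.ofReal (Real.exp (f n x))) ∂μ :=
          lintegral_mono fun x => hK _
      _ = ∫⁻ x, F n x ∂μ + δ * ∫⁻ x, ENNReal.ofReal (Real.exp (f n x)) ∂μ := by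
          rw [lintegral_add_left (hFm n), lintegral_const_mul _ (hf n).exp.ennreal_ofReal]
      _ ≤ _ := by gcongr; exact hC n
  have hδC : (δ : ℝ≥0∞) * C ≤ ε := by
    rw [← ENNReal.coe_mul, ENNReal.coe_le_coe]
    calc δ * C ≤ δ * (C + 1) := by gcongr; exact le_self_add
      _ = ε := div_mul_cancel₀ _ (by positivity)
  calc limsup (fun n => ∫⁻ x, ENNReal.ofReal (f n x) ∂μ) atTop
      ≤ limsup (fun n => ∫⁻ x, F n x ∂μ + δ * C) atTop := limsup_le_limsup (.of_forall hbound)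
    _ = ∫⁻ x, min (ENNReal.ofReal (g x)) (ENNReal.ofReal K) ∂μ + δ * C :=
        (htrunc.add_const _).limsup_eq
    _ ≤ ∫⁻ x, ENNReal.ofReal (g x) ∂μ + ε :=
        add_le_add (lintegral_mono fun x => min_le_left _ _) hδC

theorem tendsto_integral_of_lintegral_exp_le (hf : ∀ n, Measurable (f n))
    (hf0 : ∀ n, 0 ≤ᵐ[μ] f n) (hfg : ∀ᵐ x ∂μ, Tendsto (fun n => f n x) atTop (𝓝 (g x)))
    (hC : ∀ n, ∫⁻ x, ENNReal.ofReal (Real.exp (f n x)) ∂μ ≤ C) :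
    Tendsto (fun n => ∫ x, f n x ∂μ) atTop (𝓝 (∫ x, g x ∂μ)) := by
  have hlim := tendsto_lintegral_of_lintegral_exp_le hf hfg hC
  have hfin : ∫⁻ x, ENNReal.ofReal (g x) ∂μ ≠ ∞ := by
    refine ne_top_of_le_ne_top (ENNReal.coe_ne_top (r := C)) (le_of_tendsto' hlim fun n => ?_)
    refine (lintegral_mono fun x => ENNReal.ofReal_le_ofReal ?_).trans (hC n)
    linarith [Real.add_one_le_exp (f n x)]
  have hg0 : 0 ≤ᵐ[μ] g :=
    (hfg.and (ae_all_iff.2 hf0)).mono fun x hx => ge_of_tendsto' hx.1 hx.2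
  have hgm : AEStronglyMeasurable g μ :=
    (aemeasurable_of_tendsto_metrizable_ae' (fun n => (hf n).aemeasurable) hfg).aestronglyMeasurable
  simp_rw [integral_eq_lintegral_of_nonneg_ae (hf0 _) (hf _).aestronglyMeasurable,
    integral_eq_lintegral_of_nonneg_ae hg0 hgm]
  exact (ENNReal.tendsto_toReal hfin).comp hlim

end ExpMoment

lemma mul_neg_log_le_negMulLog {p c : ℝ} (hp : 0 ≤ p) (hpc : p ≤ c) :
    p * -Real.log c ≤ Real.negMulLog p := by
  rcases hp.eq_or_lt with rfl | hp
  · simp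
  · rw [Real.negMulLog, neg_mul, mul_neg]
    exact neg_le_neg (mul_le_mul_of_nonneg_left (Real.log_le_log hp hpc) hp.le)

lemma sq_le_two_mul_two_pow (r : ℕ) : r ^ 2 ≤ 2 * 2 ^ r := by
  induction r with
  | zero => norm_num
  | succ r ih =>
    have := Nat.lt_two_pow_self (n := r)
    rw [pow_succ 2 r]
    nlinarith

lemma measure_preimage_image_eq_of_le_comap {X Y : Type*} [mX : MeasurableSpace X] {f : X → Y}
    (hf : mX ≤ MeasurableSpace.comap f ⊤) (μ : Measure X) (S : Set X) :
    μ (f ⁻¹' (f '' S)) = μ S := by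
  refine le_antisymm ?_ (measure_mono (Set.subset_preimage_image f S))
  rw [measure_eq_iInf S]
  refine le_iInf fun t => le_iInf fun hSt => le_iInf fun ht => measure_mono ?_
  obtain ⟨T, -, rfl⟩ := hf t ht
  exact (Set.preimage_mono (Set.image_mono hSt)).trans
    (Set.preimage_mono (Set.image_preimage_subset f T))

section Atoms

variable (A) in
def atomSetoid : Setoid A where
  r a b := measurableAtom a = measurableAtom b
  iseqv := ⟨fun _ => rfl, Eq.symm, Eq.trans⟩

variable (A) in
abbrev Atom := Quotient (atomSetoid A)

instance : MeasurableSpace (Atom A) := ⊤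

instance [Finite A] : Fintype (Atom A) := Fintype.ofFinite _

def atomOf (a : A) : Atom A := Quotient.mk _ a

lemma atomOf_surjective : Function.Surjective (atomOf : A → Atom A) := Quotient.mk_surjective

lemma atomOf_eq_iff {a b : A} : atomOf a = atomOf b ↔ a ∈ measurableAtom b :=
  Quotient.eq.trans ⟨fun h => h ▸ mem_measurableAtom_self a, measurableAtom_eq_of_mem⟩

lemma mem_of_atomOf_eq {s : Set A} (hs : MeasurableSet s) {a b : A} (ha : a ∈ s)
    (h : atomOf a = atomOf b) : b ∈ s :=
  mem_of_mem_measurableAtom (atomOf_eq_iff.1 h.symm) hs ha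

lemma measurable_atomOf [Countable A] : Measurable (atomOf : A → Atom A) := by
  refine measurable_to_countable' fun γ => ?_
  obtain ⟨a, rfl⟩ := atomOf_surjective γ
  have : atomOf ⁻¹' {atomOf a} = measurableAtom a := Set.ext fun _ => atomOf_eq_iff
  rw [this]
  exact .measurableAtom_of_countable a

end Atoms

section Words

def atomSeq (x : ℕ → A) : ℕ → Atom A := fun i => atomOf (x i)

def atomWord (n : ℕ) (x : ℕ → A) : Fin n → Atom A := fun i => atomOf (x i)

lemma atomWord_shift (n : ℕ) (x : ℕ → A) :
    atomWord n (shift x) = Fin.tail (atomWord (n + 1) x) := rfl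

lemma pi_le_comap_atomSeq :
    (MeasurableSpace.pi : MeasurableSpace (ℕ → A)) ≤ MeasurableSpace.comap atomSeq ⊤ := by
  refine iSup_le fun i => ?_
  rintro - ⟨s, hs, rfl⟩
  refine ⟨{z | z i ∈ atomOf '' s}, trivial, Set.ext fun y => ⟨?_, fun hy => ⟨y i, hy, rfl⟩⟩⟩
  rintro ⟨a, ha, hay⟩
  exact mem_of_atomOf_eq hs ha hay

lemma atomSeq_preimage_image_cylW {n : ℕ} (w : Fin n → A) :
    atomSeq ⁻¹' (atomSeq '' cylW w) = atomWord n ⁻¹' {atomOf ∘ w} := by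
  ext y
  constructor
  · rintro ⟨y', hy', hyy'⟩
    funext i
    simp only [atomWord, Function.comp_apply, ← hy' i]
    exact (congrFun hyy' i).symm
  · intro hy
    refine ⟨fun i => if h : i < n then w ⟨i, h⟩ else y i, fun i => by simp,
      funext fun i => ?_⟩
    by_cases h : i < n
    · simp only [atomSeq, h, dif_pos]
      exact (congrFun hy ⟨i, h⟩).symm
    · simp [atomSeq, h]

lemma measure_cylW (P : Measure (ℕ → A)) {n : ℕ} (w : Fin n → A) :
    P (cylW w) = P (atomWord n ⁻¹' {atomOf ∘ w}) := by
  rw [← atomSeq_preimage_image_cylW, measure_preimage_image_eq_of_le_comap pi_le_comap_atomSeq]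

lemma measure_cyl (P : Measure (ℕ → A)) (x : ℕ → A) (n : ℕ) :
    P (cyl x n) = P (atomWord n ⁻¹' {atomWord n x}) := by
  have : cyl x n = cylW (fun i : Fin n => x i) :=
    Set.ext fun _ => ⟨fun h i => h i i.isLt, fun h i hi => h ⟨i, hi⟩⟩
  rw [this, measure_cylW]
  rfl

def wordProb (P : Measure (ℕ → A)) {n : ℕ} (q : Fin n → Atom A) : ℝ :=
  P.real (atomWord n ⁻¹' {q})

lemma wordProb_nonneg (P : Measure (ℕ → A)) {n : ℕ} (q : Fin n → Atom A) :
    0 ≤ wordProb P q :=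
  measureReal_nonneg

lemma Zf_succ_eq (P : Measure (ℕ → A)) (n : ℕ) (x : ℕ → A) :
    Zf P (n + 1) x =
      wordProb P (Fin.tail (atomWord (n + 1) x)) / wordProb P (atomWord (n + 1) x) := by
  rw [Zf, Nat.add_sub_cancel, measure_cyl, measure_cyl, atomWord_shift]
  rfl

variable [Finite A]

lemma measurable_atomWord (n : ℕ) : Measurable (atomWord n : (ℕ → A) → Fin n → Atom A) :=
  measurable_pi_lambda _ fun _ => measurable_atomOf.comp (measurable_pi_apply _)

variable (P : Measure (ℕ → A)) [IsFiniteMeasure P]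

lemma sum_wordProb {n : ℕ} (S : Finset (Fin n → Atom A)) :
    ∑ q ∈ S, wordProb P q = P.real (atomWord n ⁻¹' S) :=
  sum_measureReal_preimage_singleton S fun _ _ => measurable_atomWord n (measurableSet_singleton _)

lemma sum_univ_wordProb [IsProbabilityMeasure P] (n : ℕ) :
    ∑ q : Fin n → Atom A, wordProb P q = 1 := by
  simp [sum_wordProb]

open scoped Classical in
lemma ae_wordProb_atomWord_pos (n : ℕ) : ∀ᵐ x ∂P, 0 < wordProb P (atomWord n x) := by
  have hnull : P.real (atomWord n ⁻¹' {q | wordProb P q = 0}) = 0 := by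
    rw [← Finset.coe_filter_univ, ← sum_wordProb]
    exact Finset.sum_eq_zero fun q hq => (Finset.mem_filter.1 hq).2
  rw [measureReal_eq_zero_iff] at hnull
  filter_upwards [measure_eq_zero_iff_ae_notMem.1 hnull] with x hx
  exact (wordProb_nonneg P _).lt_of_ne (Ne.symm hx)

lemma integral_comp_atomWord {n : ℕ} (G : (Fin n → Atom A) → ℝ) :
    ∫ x, G (atomWord n x) ∂P = ∑ q, wordProb P q * G q := by
  rw [← integral_map (measurable_atomWord n).aemeasurable
    (measurable_of_countable G).aestronglyMeasurable, integral_fintype .of_finite]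
  refine Finset.sum_congr rfl fun q _ => ?_
  rw [map_measureReal_apply (measurable_atomWord n) (measurableSet_singleton q), smul_eq_mul]
  rfl

lemma integrable_comp_atomWord {n : ℕ} (G : (Fin n → Atom A) → ℝ) :
    Integrable (fun x => G (atomWord n x)) P :=
  Integrable.of_finite.comp_measurable (measurable_atomWord n)

variable {P} (hinv : MeasurePreserving (shift : (ℕ → A) → (ℕ → A)) P P)
include hinv

lemma wordProb_le_wordProb_tail {n : ℕ} (q : Fin (n + 1) → Atom A) :
    wordProb P q ≤ wordProb P (Fin.tail q) := by
  rw [wordProb, wordProb, ← hinv.measureReal_preimage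
    (measurable_atomWord n (measurableSet_singleton _)).nullMeasurableSet]
  refine measureReal_mono fun x hx => ?_
  simp only [Set.mem_preimage, Set.mem_singleton_iff, atomWord_shift] at hx ⊢
  rw [hx]

lemma sum_wordProb_mul_comp_tail {n : ℕ} (G : (Fin n → Atom A) → ℝ) :
    ∑ q : Fin (n + 1) → Atom A, wordProb P q * G (Fin.tail q) = ∑ u, wordProb P u * G u := by
  rw [← integral_comp_atomWord, ← integral_comp_atomWord]
  simp_rw [← atomWord_shift]
  have h := integral_map hinv.aemeasurable
    ((measurable_of_countable G).comp (measurable_atomWord n)).aestronglyMeasurable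
  rw [hinv.map_eq] at h
  exact h.symm

end Words

section Entropy

variable [Finite A] (P : Measure (ℕ → A))

def atomEntropy (n : ℕ) : ℝ := ∑ q : Fin n → Atom A, Real.negMulLog (wordProb P q)

lemma measurable_Zf_succ (n : ℕ) : Measurable (Zf P (n + 1)) := by
  rw [funext (Zf_succ_eq P n)]
  exact (measurable_of_countable fun q : Fin (n + 1) → Atom A =>
    wordProb P (Fin.tail q) / wordProb P q).comp (measurable_atomWord (n + 1))

variable [IsProbabilityMeasure P]

lemma atomEntropy_zero : atomEntropy P 0 = 0 := by
  have : atomWord 0 ⁻¹' {default} = (Set.univ : Set (ℕ → A)) :=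
    Set.eq_univ_of_forall fun _ => Subsingleton.elim _ _
  simp [atomEntropy, wordProb, this]

lemma integral_log_wordProb_atomWord (n : ℕ) :
    ∫ x, Real.log (wordProb P (atomWord n x)) ∂P = -atomEntropy P n := by
  rw [integral_comp_atomWord P fun q => Real.log (wordProb P q)]
  simp [atomEntropy, Real.negMulLog]

lemma integrable_Zf_succ (n : ℕ) : Integrable (Zf P (n + 1)) P := by
  rw [funext (Zf_succ_eq P n)]
  exact integrable_comp_atomWord P fun q => wordProb P (Fin.tail q) / wordProb P q

lemma integral_Zf_succ_le (n : ℕ) : ∫ x, Zf P (n + 1) x ∂P ≤ Fintype.card (Atom A) := by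
  simp_rw [Zf_succ_eq]
  rw [integral_comp_atomWord P fun q => wordProb P (Fin.tail q) / wordProb P q]
  calc ∑ q, wordProb P q * (wordProb P (Fin.tail q) / wordProb P q)
      ≤ ∑ q : Fin (n + 1) → Atom A, wordProb P (Fin.tail q) := by
        refine Finset.sum_le_sum fun q _ => ?_
        rcases (wordProb_nonneg P q).eq_or_lt with h | h
        · rw [← h, zero_mul]
          exact wordProb_nonneg P _
        · rw [mul_div_cancel₀ _ h.ne']
    _ = Fintype.card (Atom A) * ∑ u : Fin n → Atom A, wordProb P u := by
        rw [← (Fin.consEquiv fun _ => Atom A).sum_comp, Fintype.sum_prod_type]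
        simp [Fin.consEquiv]
    _ = Fintype.card (Atom A) := by rw [sum_univ_wordProb, mul_one]

variable {P} (hinv : MeasurePreserving (shift : (ℕ → A) → (ℕ → A)) P P)
include hinv

lemma ae_one_le_Zf_succ : ∀ᵐ x ∂P, ∀ n, 1 ≤ Zf P (n + 1) x := by
  refine ae_all_iff.2 fun n => (ae_wordProb_atomWord_pos P (n + 1)).mono fun x hx => ?_
  rw [Zf_succ_eq]
  exact (one_le_div hx).2 (wordProb_le_wordProb_tail hinv _)

lemma integral_log_Zf_succ (n : ℕ) :
    ∫ x, Real.log (Zf P (n + 1) x) ∂P = atomEntropy P (n + 1) - atomEntropy P n := by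
  set L : ∀ {k : ℕ}, (Fin k → Atom A) → ℝ := fun q => Real.log (wordProb P q)
  have hae : (fun x => Real.log (Zf P (n + 1) x)) =ᵐ[P]
      fun x => L (Fin.tail (atomWord (n + 1) x)) - L (atomWord (n + 1) x) := by
    filter_upwards [ae_wordProb_atomWord_pos P (n + 1)] with x hx
    rw [Zf_succ_eq, Real.log_div (hx.trans_le (wordProb_le_wordProb_tail hinv _)).ne' hx.ne']
  have htail : ∫ x, L (Fin.tail (atomWord (n + 1) x)) ∂P = -atomEntropy P n := by
    rw [integral_comp_atomWord P fun q => L (Fin.tail q), sum_wordProb_mul_comp_tail hinv L,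
      ← integral_comp_atomWord P L, integral_log_wordProb_atomWord]
  rw [integral_congr_ae hae, integral_sub (integrable_comp_atomWord P fun q => L (Fin.tail q))
    (integrable_comp_atomWord P L), htail, integral_log_wordProb_atomWord]
  ring

variable {ZL : (ℕ → A) → ℝ}
  (hZL : ∀ᵐ x ∂P, Tendsto (fun n => Zf P (n + 1) x) atTop (𝓝 (ZL x)))
include hZL

lemma tendsto_integral_log_Zf_succ :
    Tendsto (fun n => ∫ x, Real.log (Zf P (n + 1) x) ∂P) atTop
      (𝓝 (∫ x, Real.log (ZL x) ∂P)) := by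
  have hZ1 := ae_one_le_Zf_succ hinv
  refine tendsto_integral_of_lintegral_exp_le (C := Fintype.card (Atom A))
    (fun n => (measurable_Zf_succ P n).log) (fun n => ?_) ?_ fun n => ?_
  · filter_upwards [hZ1] with x hx using Real.log_nonneg (hx n)
  · filter_upwards [hZL, hZ1] with x hx h1
    exact (Real.continuousAt_log (one_pos.trans_le (ge_of_tendsto' hx h1)).ne').tendsto.comp hx
  · calc ∫⁻ x, ENNReal.ofReal (Real.exp (Real.log (Zf P (n + 1) x))) ∂P
        = ∫⁻ x, ENNReal.ofReal (Zf P (n + 1) x) ∂P := by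
          refine lintegral_congr_ae ?_
          filter_upwards [hZ1] with x hx
          rw [Real.exp_log (one_pos.trans_le (hx n))]
      _ = ENNReal.ofReal (∫ x, Zf P (n + 1) x ∂P) := by
          refine (ofReal_integral_eq_lintegral_ofReal (integrable_Zf_succ P n) ?_).symm
          filter_upwards [hZ1] with x hx using zero_le_one.trans (hx n)
      _ ≤ Fintype.card (Atom A) := by
          simpa using ENNReal.ofReal_le_ofReal (integral_Zf_succ_le P n)

theorem tendsto_atomEntropy_div :
    Tendsto (fun n : ℕ => atomEntropy P n / n) atTop (𝓝 (∫ x, Real.log (ZL x) ∂P)) := by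
  refine (tendsto_integral_log_Zf_succ hinv hZL).cesaro.congr fun n => ?_
  rw [Finset.sum_congr rfl fun k _ => integral_log_Zf_succ hinv k, Finset.sum_range_sub,
    atomEntropy_zero, sub_zero, inv_mul_eq_div]

end Entropy

def letterProb (P : Measure (ℕ → A)) (γ : Atom A) : ℝ := P.real {x | atomOf (x 0) = γ}

section Letters

variable [Finite A] {P : Measure (ℕ → A)}

lemma measurableSet_atomOf_apply_eq (j : ℕ) (γ : Atom A) :
    MeasurableSet {x : ℕ → A | atomOf (x j) = γ} :=
  measurableSet_eq_fun (measurable_atomOf.comp (measurable_pi_apply j)) measurable_const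

lemma letterProb_add_letterProb_le [IsProbabilityMeasure P] {γ δ : Atom A} (h : γ ≠ δ) :
    letterProb P γ + letterProb P δ ≤ 1 := by
  rw [letterProb, letterProb, ← measureReal_union _ (measurableSet_atomOf_apply_eq 0 δ)]
  · exact measureReal_le_one
  · exact Set.disjoint_left.2 fun x hγ hδ => h (hγ.symm.trans hδ)

lemma letterProb_lt_one [IsProbabilityMeasure P] {γ : Atom A} (h0 : 0 < letterProb P γ)
    (h1 : letterProb P γ < 1) (δ : Atom A) : letterProb P δ < 1 := by
  rcases eq_or_ne δ γ with rfl | hδ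
  · exact h1
  · linarith [letterProb_add_letterProb_le (P := P) hδ]

variable (hinv : MeasurePreserving (shift : (ℕ → A) → (ℕ → A)) P P)
include hinv

lemma measureReal_atomOf_apply_eq (j : ℕ) (γ : Atom A) :
    P.real {x | atomOf (x j) = γ} = letterProb P γ := by
  have hshift : ∀ (k i : ℕ) (x : ℕ → A), shift^[k] x i = x (i + k) := fun k => by
    induction k with
    | zero => exact fun _ _ => rfl
    | succ k ih => exact fun i x => (ih i (shift x)).trans (congrArg x (Nat.add_assoc i k 1))
  have : {x : ℕ → A | atomOf (x j) = γ} = shift^[j] ⁻¹' {x | atomOf (x 0) = γ} := by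
    ext x
    simp [hshift]
  rw [this, (hinv.iterate j).measureReal_preimage
    (measurableSet_atomOf_apply_eq 0 γ).nullMeasurableSet, letterProb]

variable [IsProbabilityMeasure P]

lemma wordProb_le_letterProb {n : ℕ} (q : Fin n → Atom A) (i : Fin n) :
    wordProb P q ≤ letterProb P (q i) := by
  rw [← measureReal_atomOf_apply_eq hinv i]
  exact measureReal_mono fun x hx => congrFun hx i

lemma negMulLog_wordProb_eq_zero {n : ℕ} {q : Fin n → Atom A} {i : Fin n}
    (h : letterProb P (q i) = 0 ∨ letterProb P (q i) = 1) :
    Real.negMulLog (wordProb P q) = 0 := by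
  rcases h with h0 | h1
  · rw [le_antisymm (h0 ▸ wordProb_le_letterProb hinv q i) (wordProb_nonneg P q),
      Real.negMulLog_zero]
  have hletter : ∀ j : Fin n, ∀ᵐ x ∂P, atomOf (x j) = q i := fun j => by
    refine (mem_ae_iff_prob_eq_one (measurableSet_atomOf_apply_eq j (q i))).2 ?_
    rw [← ENNReal.toReal_eq_one_iff, ← measureReal_def, measureReal_atomOf_apply_eq hinv, h1]
  have hmap : P.map (atomWord n) = Measure.dirac fun _ => q i := by
    rw [Measure.map_congr (g := fun _ _ => q i), Measure.map_const, measure_univ, one_smul]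
    filter_upwards [ae_all_iff.2 hletter] with x hx using funext hx
  rw [wordProb, ← map_measureReal_apply (measurable_atomWord n) (measurableSet_singleton q), hmap]
  by_cases hq : (fun _ => q i) = q <;> simp [Measure.real, hq]

end Letters

section BlockEntropy

variable [Fintype A]

open scoped Classical in
def atomCard (γ : Atom A) : ℕ := #{a | atomOf a = γ}

lemma one_le_atomCard (γ : Atom A) : 1 ≤ atomCard γ := by
  obtain ⟨a, rfl⟩ := atomOf_surjective γ
  exact Finset.card_pos.2 ⟨a, by simp⟩

open scoped Classical in
def letterCount (γ : Atom A) {n : ℕ} (q : Fin n → Atom A) : ℕ := #{j | q j = γ}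

lemma two_pow_letterCount_le_prod_atomCard {γ : Atom A} (hγ : 2 ≤ atomCard γ) {n : ℕ}
    (q : Fin n → Atom A) : 2 ^ letterCount γ q ≤ ∏ i, atomCard (q i) := by
  classical
  calc 2 ^ letterCount γ q = ∏ i, if q i = γ then 2 else 1 := by
        rw [Finset.prod_ite, Finset.prod_const, Finset.prod_const_one, mul_one, letterCount]
    _ ≤ ∏ i, atomCard (q i) := by
        refine Finset.prod_le_prod' fun i _ => ?_
        split_ifs with h
        · exact h ▸ hγ
        · exact one_le_atomCard _

lemma Hn_eq_sum_prod_atomCard (P : Measure (ℕ → A)) (n : ℕ) :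
    Hn P n = ∑ q : Fin n → Atom A,
      (∏ i, (atomCard (q i) : ℝ)) * Real.negMulLog (wordProb P q) := by
  classical
  have hfiber (q : Fin n → Atom A) :
      #{w : Fin n → A | atomOf ∘ w = q} = ∏ i, atomCard (q i) := by
    simp only [atomCard]
    rw [← Fintype.card_piFinset]
    congr 1
    ext w
    simp [funext_iff]
  calc Hn P n = ∑ w : Fin n → A, Real.negMulLog (wordProb P (atomOf ∘ w)) := by
        simp only [Hn, measure_cylW]
        rfl
    _ = ∑ q, ∑ w with atomOf ∘ w = q, Real.negMulLog (wordProb P q) :=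
        (Finset.sum_fiberwise' _ (atomOf ∘ ·) fun q => Real.negMulLog (wordProb P q)).symm
    _ = _ := by simp only [Finset.sum_const, nsmul_eq_mul, hfiber, Nat.cast_prod]

end BlockEntropy

section Dichotomy

variable [Fintype A] {P : Measure (ℕ → A)} [IsProbabilityMeasure P]
  (hinv : MeasurePreserving (shift : (ℕ → A) → (ℕ → A)) P P)
include hinv

lemma Hn_eq_atomEntropy_of
    (h : ∀ γ : Atom A, atomCard γ = 1 ∨ letterProb P γ = 0 ∨ letterProb P γ = 1) (n : ℕ) :
    Hn P n = atomEntropy P n := by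
  rw [Hn_eq_sum_prod_atomCard, atomEntropy]
  refine Finset.sum_congr rfl fun q _ => ?_
  by_cases hq : ∀ i, atomCard (q i) = 1
  · simp [hq]
  · obtain ⟨i, hi⟩ := not_forall.1 hq
    rw [negMulLog_wordProb_eq_zero hinv ((h (q i)).resolve_left hi), mul_zero]

lemma sum_wordProb_mul_letterCount (γ : Atom A) (n : ℕ) :
    ∑ q : Fin n → Atom A, wordProb P q * letterCount γ q = n * letterProb P γ := by
  classical
  have hcoord (j : Fin n) :
      ∑ q : Fin n → Atom A, (if q j = γ then wordProb P q else 0) = letterProb P γ := by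
    rw [← Finset.sum_filter, sum_wordProb, Finset.coe_filter_univ,
      ← measureReal_atomOf_apply_eq hinv j]
    rfl
  simp_rw [letterCount, Finset.card_filter, Nat.cast_sum, Finset.mul_sum]
  rw [Finset.sum_comm]
  simp [hcoord]

/-- Over an atom word with `r` occurrences of `γ` lie at least `2 ^ r ≥ r ^ 2 / 2` words, each of
probability at most `c`; Jensen bounds the mean of `r ^ 2` below by `((n + 1) p) ^ 2`. -/
lemma mul_sq_le_Hn {γ : Atom A} (hγ : 2 ≤ atomCard γ) {c : ℝ} (hc0 : 0 ≤ c) (hc1 : c ≤ 1)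
    (hc : ∀ δ, letterProb P δ ≤ c) (n : ℕ) :
    -Real.log c / 2 * ((n + 1) * letterProb P γ) ^ 2 ≤ Hn P (n + 1) := by
  have hβ : 0 ≤ -Real.log c := neg_nonneg.2 (Real.log_nonpos hc0 hc1)
  have hjensen := (even_two.convexOn_pow (𝕜 := ℝ)).map_sum_le (t := Finset.univ)
    (w := wordProb P) (p := fun q : Fin (n + 1) → Atom A => (letterCount γ q : ℝ))
    (fun q _ => wordProb_nonneg P q) (sum_univ_wordProb P _) fun _ _ => Set.mem_univ _
  simp only [smul_eq_mul] at hjensen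
  rw [Hn_eq_sum_prod_atomCard, ← Nat.cast_add_one, ← sum_wordProb_mul_letterCount hinv]
  calc -Real.log c / 2 * (∑ q, wordProb P q * letterCount γ q) ^ 2
      ≤ -Real.log c / 2 * ∑ q, wordProb P q * (letterCount γ q : ℝ) ^ 2 := by gcongr
    _ = ∑ q, (letterCount γ q : ℝ) ^ 2 / 2 * (wordProb P q * -Real.log c) := by
        rw [Finset.mul_sum]
        exact Finset.sum_congr rfl fun q _ => by ring
    _ ≤ ∑ q, (∏ i, (atomCard (q i) : ℝ)) * Real.negMulLog (wordProb P q) := by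
        refine Finset.sum_le_sum fun q _ => mul_le_mul ?_ ?_ ?_ ?_
        · have h : letterCount γ q ^ 2 ≤ 2 * ∏ i, atomCard (q i) :=
            (sq_le_two_mul_two_pow _).trans
              (Nat.mul_le_mul_left 2 (two_pow_letterCount_le_prod_atomCard hγ q))
          have h' : (letterCount γ q : ℝ) ^ 2 ≤ 2 * ∏ i, (atomCard (q i) : ℝ) := by
            exact_mod_cast h
          linarith
        · exact mul_neg_log_le_negMulLog (wordProb_nonneg P q)
            ((wordProb_le_letterProb hinv q 0).trans (hc _))
        · exact mul_nonneg (wordProb_nonneg P q) hβ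
        · positivity

lemma tendsto_Hn_div_atTop {γ : Atom A} (hγ : 2 ≤ atomCard γ) (h0 : 0 < letterProb P γ)
    (h1 : letterProb P γ < 1) : Tendsto (fun n : ℕ => Hn P n / n) atTop atTop := by
  have : Nonempty (Atom A) := ⟨γ⟩
  obtain ⟨δ, hδ⟩ := Finite.exists_max (letterProb P)
  set c := letterProb P δ
  have hc0 : 0 < c := h0.trans_le (hδ γ)
  have hc1 : c < 1 := letterProb_lt_one h0 h1 δ
  have hβ : 0 < -Real.log c := neg_pos.2 (Real.log_neg hc0 hc1)
  have hlin : Tendsto (fun n : ℕ => -Real.log c / 2 * letterProb P γ ^ 2 * (n + 1)) atTop atTop :=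
    (tendsto_atTop_add_const_right _ 1 tendsto_natCast_atTop_atTop).const_mul_atTop
      (by positivity)
  rw [← tendsto_add_atTop_iff_nat 1]
  refine tendsto_atTop_mono (fun n => ?_) hlin
  rw [Nat.cast_add_one, le_div_iff₀ (by positivity)]
  calc _ = -Real.log c / 2 * ((n + 1) * letterProb P γ) ^ 2 := by ring
    _ ≤ Hn P (n + 1) := mul_sq_le_Hn hinv hγ hc0.le hc1.le hδ n

theorem Hn_eq_atomEntropy {h : ℝ} (hlim : Tendsto (fun n : ℕ => Hn P n / n) atTop (𝓝 h))
    (n : ℕ) : Hn P n = atomEntropy P n := by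
  refine Hn_eq_atomEntropy_of hinv (fun γ => ?_) n
  by_contra hne
  obtain ⟨hcard, h0, h1⟩ := by simpa only [not_or] using hne
  refine not_tendsto_nhds_of_tendsto_atTop (tendsto_Hn_div_atTop hinv (γ := γ) ?_ ?_ ?_) h hlim
  · exact (one_le_atomCard γ).lt_of_ne (Ne.symm hcard)
  · exact measureReal_nonneg.lt_of_ne (Ne.symm h0)
  · exact measureReal_le_one.lt_of_ne h1

end Dichotomy

theorem stmt3 [Fintype A] (P : Measure (ℕ → A)) [IsProbabilityMeasure P]
    (hinv : MeasurePreserving (shift : (ℕ → A) → (ℕ → A)) P P)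
    (ZL : (ℕ → A) → ℝ)
    (hZL : ∀ᵐ x ∂P, Tendsto (fun n : ℕ => Zf P (n + 1) x) atTop (nhds (ZL x)))
    (hent : ℝ)
    (hlim : Tendsto (fun n : ℕ => Hn P n / n) atTop (nhds hent)) :
    ∫ x, Real.log (ZL x) ∂P = hent :=
  tendsto_nhds_unique
    ((tendsto_atomEntropy_div hinv hZL).congr fun n => by rw [Hn_eq_atomEntropy hinv hlim n]) hlim
end
end

section
/- Let ψ_{m,M} := sup_{k≥m} |log Z_k − log Z_M|. Then lim_{M→∞} lim_{m→∞} lim_{N→∞} E_P[(1/N) Σ_{k=0}^{N−1} ψ_{m,M}(T^k ·)] = 0; in fact each inner limit equals E_P(ψ_{m,M}) by shift-invariance, lim_{m→∞} E_P(ψ_{m,M}) = E_P(|log Z − log Z_M|) by monotone convergence, and this tends to 0 as M → ∞. -/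
open MeasureTheory Filter Finset

noncomputable section

variable {A : Type*}

variable [MeasurableSpace A]

/-- `log Z_max = sup_{n ≥ 1} log Z_n` -/
def ZmaxLog (P : Measure (ℕ → A)) (x : ℕ → A) : ℝ :=
  ⨆ n : ℕ, Real.log (Zf P (n + 1) x)

/-- `ψ_{m,M} = sup_{k ≥ m} |log Z_k − log Z_M|` -/
def psi (P : Measure (ℕ → A)) (m M : ℕ) (x : ℕ → A) : ℝ :=
  ⨆ k : {k : ℕ // m ≤ k}, |Real.log (Zf P k.val x) - Real.log (Zf P M x)|

open Set
open scoped ENNReal Topology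

/-!
Shift-invariance gives every Birkhoff average of `ψ_{m,M}` the integral of `ψ_{m,M}`. It also
gives `1 ≤ Z_k` almost surely, so `log Z_k`, `ψ_{m,M}` and `|log Z - log Z_M|` all take values in
`[0, log Z_max]`, and the other two limits follow by dominated convergence once `log Z_max` is
integrable. Over a finite alphabet it is, by Chung's maximal inequality
`P(log Z_max > t) ≤ |A| e^{-t}`: split according to the first letter `a` and to the first time `n`
at which `P([a x_1^n]) < e^{-t} P([x_1^n])`; on each such cylinder the event has conditional
probability below `e^{-t}`, and these cylinders are disjoint.

The σ-algebra on `A` is arbitrary, so cylinders need not be measurable; they are replaced by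
cylinders of measurable atoms, which are measurable and have the same outer measure.
-/

theorem univ_pi_measurableAtom_subset {ι : Type*} {α : ι → Type*} [∀ i, MeasurableSpace (α i)]
    (z : ∀ i, α i) : univ.pi (fun i => measurableAtom (z i)) ⊆ measurableAtom z := by
  let saturated : MeasurableSpace (∀ i, α i) :=
    { MeasurableSet' := fun U => ∀ z ∈ U, univ.pi (fun i => measurableAtom (z i)) ⊆ U
      measurableSet_empty := fun _ h => h.elim
      measurableSet_compl := fun U hU z hz y hy hyU => hz <| hU y hyU fun i _ => by
        change z i ∈ measurableAtom (y i)
        rw [measurableAtom_eq_of_mem (hy i trivial)]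
        exact mem_measurableAtom_self (z i)
      measurableSet_iUnion := fun f hf z hz => by
        obtain ⟨i, hi⟩ := mem_iUnion.1 hz
        exact (hf i z hi).trans (subset_iUnion f i) }
  have hpi : MeasurableSpace.pi ≤ saturated := iSup_le fun i S ⟨T, hT, hS⟩ => by
    subst hS
    exact fun z hz y hy => mem_of_mem_measurableAtom (hy i trivial) hT hz
  intro y hy
  simp only [measurableAtom, mem_iInter]
  exact fun U hzU hU => hpi U hU z hzU hy

def atomCyl (x : ℕ → A) (n : ℕ) : Set (ℕ → A) := {y | ∀ i < n, y i ∈ measurableAtom (x i)}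

def atomCons (a : A) (S : Set (ℕ → A)) : Set (ℕ → A) := {x | x 0 ∈ measurableAtom a ∧ shift x ∈ S}

lemma mem_atomCyl_self (x : ℕ → A) (n : ℕ) : x ∈ atomCyl x n :=
  fun i _ => mem_measurableAtom_self (x i)

lemma atomCyl_eq_of_mem {x y : ℕ → A} {n : ℕ} (h : y ∈ atomCyl x n) :
    atomCyl y n = atomCyl x n := by
  ext z
  refine forall₂_congr fun i hi => ?_
  rw [measurableAtom_eq_of_mem (h i hi)]

lemma mem_atomCyl_comm {x y : ℕ → A} {n : ℕ} (h : y ∈ atomCyl x n) : x ∈ atomCyl y n := by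
  rw [atomCyl_eq_of_mem h]
  exact mem_atomCyl_self x n

lemma atomCyl_anti (x : ℕ → A) {m n : ℕ} (h : m ≤ n) : atomCyl x n ⊆ atomCyl x m :=
  fun _ hy i hi => hy i (hi.trans_le h)

lemma atomCyl_succ (x : ℕ → A) (n : ℕ) :
    atomCyl x (n + 1) = atomCons (x 0) (atomCyl (shift x) n) := by
  ext y
  simp only [atomCyl, atomCons, shift, mem_ofPred_eq]
  constructor
  · exact fun h => ⟨h 0 n.succ_pos, fun i hi => h (i + 1) (by omega)⟩
  · rintro ⟨h0, hs⟩ (_ | i) hi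
    exacts [h0, hs i (by omega)]

lemma measurableSet_atomCyl [Finite A] (x : ℕ → A) (n : ℕ) : MeasurableSet (atomCyl x n) :=
  MeasurableSet.pi (to_countable _) fun i _ => MeasurableSet.measurableAtom_of_countable (x i)

lemma finite_range_atomCyl [Finite A] (n : ℕ) : (range fun x : ℕ → A => atomCyl x n).Finite := by
  refine (finite_range fun t : Fin n → Set A => {y : ℕ → A | ∀ i, y i ∈ t i}).subset ?_
  rintro _ ⟨x, rfl⟩
  exact ⟨fun i => measurableAtom (x i), by ext y; simp [atomCyl, Fin.forall_iff]⟩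

lemma measure_cyl_eq_measure_atomCyl [Finite A] (P : Measure (ℕ → A)) (x : ℕ → A) (n : ℕ) :
    P (cyl x n) = P (atomCyl x n) := by
  refine le_antisymm (measure_mono fun y hy i hi => hy i hi ▸ mem_measurableAtom_self (x i)) ?_
  rw [← measure_toMeasurable (cyl x n)]
  refine measure_mono fun y hy => ?_
  classical
  let z : ℕ → A := fun i => if i < n then x i else y i
  have hz : z ∈ toMeasurable P (cyl x n) := subset_toMeasurable P _ fun i hi => if_pos hi
  refine mem_of_mem_measurableAtom (univ_pi_measurableAtom_subset z fun i _ => ?_)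
    (measurableSet_toMeasurable P _) hz
  by_cases hi : i < n
  · simpa [z, hi] using hy i hi
  · simp [z, hi]

/-- Events depending only on the first `n` coordinates. -/
abbrev atomCylSpace (n : ℕ) : MeasurableSpace (ℕ → A) where
  MeasurableSet' S := ∀ y ∈ S, atomCyl y n ⊆ S
  measurableSet_empty := fun _ h => h.elim
  measurableSet_compl := fun _ hS _ hy _ hz hzS => hy (hS _ hzS (mem_atomCyl_comm hz))
  measurableSet_iUnion := fun f hf y hy => by
    obtain ⟨i, hi⟩ := mem_iUnion.1 hy
    exact (hf i y hi).trans (subset_iUnion f i)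

lemma atomCylSpace_mono {m n : ℕ} (h : m ≤ n) :
    (atomCylSpace m : MeasurableSpace (ℕ → A)) ≤ atomCylSpace n :=
  fun _ hS y hy => (atomCyl_anti y h).trans (hS y hy)

lemma measurableSet_atomCylSpace_setOf (n : ℕ) (p : Set (ℕ → A) → Prop) :
    MeasurableSet[atomCylSpace n] {y | p (atomCyl y n)} :=
  fun y hy z hz => by rwa [mem_ofPred_eq, atomCyl_eq_of_mem hz]

lemma sUnion_image_atomCyl {n : ℕ} {S : Set (ℕ → A)} (hS : MeasurableSet[atomCylSpace n] S) :
    ⋃₀ ((atomCyl · n) '' S) = S :=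
  (sUnion_subset (by rintro _ ⟨y, hy, rfl⟩; exact hS y hy)).antisymm
    fun y hy => mem_sUnion_of_mem (mem_atomCyl_self y n) ⟨y, hy, rfl⟩

lemma countable_image_atomCyl [Finite A] (n : ℕ) (S : Set (ℕ → A)) :
    ((atomCyl · n) '' S).Countable :=
  ((finite_range_atomCyl n).subset (image_subset_range _ _)).countable

lemma pairwise_disjoint_image_atomCyl (n : ℕ) (S : Set (ℕ → A)) :
    ((atomCyl · n) '' S).Pairwise Disjoint := by
  rintro _ ⟨x, -, rfl⟩ _ ⟨y, -, rfl⟩ hne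
  refine disjoint_left.2 fun z hzx hzy => hne ?_
  change atomCyl x n = atomCyl y n
  rw [← atomCyl_eq_of_mem hzx, atomCyl_eq_of_mem hzy]

lemma atomCylSpace_le [Finite A] (n : ℕ) :
    (atomCylSpace n : MeasurableSpace (ℕ → A)) ≤ MeasurableSpace.pi := fun S hS => by
  rw [← sUnion_image_atomCyl hS]
  exact .sUnion (countable_image_atomCyl n S)
    (by rintro _ ⟨y, -, rfl⟩; exact measurableSet_atomCyl y n)

lemma measurable_measure_atomCyl [Finite A] (P : Measure (ℕ → A)) (n : ℕ) :
    Measurable fun x => P (atomCyl x n) :=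
  fun B _ => atomCylSpace_le n _ (measurableSet_atomCylSpace_setOf n (fun s => P s ∈ B))

lemma measurable_shift : Measurable (shift : (ℕ → A) → ℕ → A) :=
  measurable_pi_lambda _ fun i => measurable_pi_apply (i + 1)

lemma Zf_eq [Finite A] (P : Measure (ℕ → A)) (n : ℕ) (x : ℕ → A) :
    Zf P n x = (P (atomCyl (shift x) (n - 1))).toReal / (P (atomCyl x n)).toReal := by
  rw [Zf, measure_cyl_eq_measure_atomCyl, measure_cyl_eq_measure_atomCyl]

lemma measurable_Zf [Finite A] (P : Measure (ℕ → A)) (n : ℕ) : Measurable (Zf P n) := by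
  simp_rw [funext (Zf_eq P n)]
  exact (((measurable_measure_atomCyl P _).comp measurable_shift).ennreal_toReal).div
    (measurable_measure_atomCyl P n).ennreal_toReal

lemma Zf_zero (P : Measure (ℕ → A)) [IsProbabilityMeasure P] (x : ℕ → A) : Zf P 0 x = 1 := by
  simp [Zf, cyl]

lemma ae_forall_measure_atomCyl_pos [Finite A] (P : Measure (ℕ → A)) :
    ∀ᵐ x ∂P, ∀ n, 0 < P (atomCyl x n) := by
  refine ae_all_iff.2 fun n => measure_mono_null (fun x hx => ?_) (measure_sUnion_null_iff
    (countable_image_atomCyl n {x | P (atomCyl x n) = 0}) |>.2 ?_)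
  · exact mem_sUnion_of_mem (mem_atomCyl_self x n) ⟨x, le_zero_iff.1 (not_lt.1 hx), rfl⟩
  · rintro _ ⟨x, hx, rfl⟩
    exact hx

lemma one_le_Zf [Finite A] {P : Measure (ℕ → A)} [IsFiniteMeasure P]
    (hinv : MeasurePreserving shift P P) {x : ℕ → A} {n : ℕ} (hx : 0 < P (atomCyl x n)) :
    1 ≤ Zf P n x := by
  have hsub : atomCyl x n ⊆ shift ⁻¹' atomCyl (shift x) (n - 1) :=
    fun y hy i hi => hy (i + 1) (by omega)
  have hle : P (atomCyl x n) ≤ P (atomCyl (shift x) (n - 1)) := (measure_mono hsub).trans_eq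
    (hinv.measure_preimage (measurableSet_atomCyl _ _).nullMeasurableSet)
  rw [Zf_eq, one_le_div (ENNReal.toReal_pos hx.ne' (measure_ne_top P _))]
  exact ENNReal.toReal_mono (measure_ne_top P _) hle

lemma measure_atomCons_le [Finite A] {P : Measure (ℕ → A)} {n : ℕ} {a : A} {ε : ℝ≥0∞}
    {S : Set (ℕ → A)} (hS : MeasurableSet[atomCylSpace n] S)
    (hε : ∀ y ∈ S, P (atomCons a (atomCyl y n)) ≤ ε * P (atomCyl y n)) :
    P (atomCons a S) ≤ ε * P S := by
  let F := (atomCyl · n) '' S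
  have hF : F.Countable := countable_image_atomCyl n S
  have hcons : atomCons a S = ⋃ s ∈ F, atomCons a s := by
    conv_lhs => rw [← sUnion_image_atomCyl hS]
    ext x
    simp only [atomCons, mem_ofPred_eq, mem_sUnion, mem_iUnion, exists_prop]
    tauto
  calc P (atomCons a S) ≤ ∑' s : F, P (atomCons a s) := hcons ▸ measure_biUnion_le P hF _
    _ ≤ ∑' s : F, ε * P s := ENNReal.tsum_le_tsum fun ⟨_, y, hy, rfl⟩ => hε y hy
    _ = ε * P S := by
      rw [ENNReal.tsum_mul_left, ← measure_sUnion hF (pairwise_disjoint_image_atomCyl n S)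
        (by rintro _ ⟨y, -, rfl⟩; exact measurableSet_atomCyl y n), sUnion_image_atomCyl hS]

/-- Chung's maximal inequality. -/
theorem measure_exists_atomCyl_lt_le [Fintype A] (P : Measure (ℕ → A)) [IsProbabilityMeasure P]
    (ε : ℝ≥0∞) :
    P {x | ∃ n, P (atomCyl x (n + 1)) < ε * P (atomCyl (shift x) n)} ≤ Fintype.card A * ε := by
  let C (a : A) (n : ℕ) : Set (ℕ → A) :=
    {y | P (atomCons a (atomCyl y n)) < ε * P (atomCyl y n)}
  have hC (a : A) (n : ℕ) : MeasurableSet[atomCylSpace n] (C a n) :=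
    measurableSet_atomCylSpace_setOf n fun s => P (atomCons a s) < ε * P s
  -- the first time `n` at which the ratio drops below `ε`
  have hD (a : A) (n : ℕ) : MeasurableSet[atomCylSpace n] (disjointed (C a) n) := by
    rw [disjointed_eq_inter_compl]
    exact (hC a n).inter
      (.iInter fun j => .iInter fun hj => atomCylSpace_mono hj.le _ (hC a j).compl)
  have hletter (a : A) : P (atomCons a (⋃ n, C a n)) ≤ ε := calc
    P (atomCons a (⋃ n, C a n)) = P (⋃ n, atomCons a (disjointed (C a) n)) := by
      rw [← iUnion_disjointed]; congr 1; ext x; simp [atomCons]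
    _ ≤ ∑' n, P (atomCons a (disjointed (C a) n)) := measure_iUnion_le _
    _ ≤ ∑' n, ε * P (disjointed (C a) n) := ENNReal.tsum_le_tsum fun n =>
      measure_atomCons_le (hD a n) fun y hy => (disjointed_subset _ n hy).le
    _ = ε * P (⋃ n, disjointed (C a) n) := by
      rw [ENNReal.tsum_mul_left, measure_iUnion (disjoint_disjointed _)
        fun n => atomCylSpace_le n _ (hD a n)]
    _ ≤ ε := mul_le_of_le_one_right' prob_le_one
  have hsub : {x | ∃ n, P (atomCyl x (n + 1)) < ε * P (atomCyl (shift x) n)} ⊆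
      ⋃ a, atomCons a (⋃ n, C a n) := by
    rintro x ⟨n, hn⟩
    rw [atomCyl_succ] at hn
    exact mem_iUnion.2 ⟨x 0, mem_measurableAtom_self _, mem_iUnion.2 ⟨n, hn⟩⟩
  calc _ ≤ ∑ a, P (atomCons a (⋃ n, C a n)) :=
        (measure_mono hsub).trans (measure_iUnion_fintype_le P _)
    _ ≤ ∑ _a : A, ε := Finset.sum_le_sum fun a _ => hletter a
    _ = Fintype.card A * ε := by simp

lemma measure_atomCyl_lt_of_exp_lt_Zf [Finite A] {P : Measure (ℕ → A)} [IsFiniteMeasure P]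
    {x : ℕ → A} {n : ℕ} {t : ℝ} (hx : 0 < P (atomCyl x (n + 1)))
    (ht : Real.exp t < Zf P (n + 1) x) :
    P (atomCyl x (n + 1)) < ENNReal.ofReal (Real.exp (-t)) * P (atomCyl (shift x) n) := by
  rw [Zf_eq, Nat.add_sub_cancel, lt_div_iff₀ (ENNReal.toReal_pos hx.ne' (measure_ne_top P _)),
    ← lt_inv_mul_iff₀ (Real.exp_pos t), ← Real.exp_neg] at ht
  rwa [← ENNReal.toReal_lt_toReal (measure_ne_top P _)
    (ENNReal.mul_ne_top ENNReal.ofReal_ne_top (measure_ne_top P _)), ENNReal.toReal_mul,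
    ENNReal.toReal_ofReal (Real.exp_pos _).le]

lemma measure_lt_ZmaxLog_le [Fintype A] (P : Measure (ℕ → A)) [IsProbabilityMeasure P] {t : ℝ}
    (ht : 0 ≤ t) : P {x | t < ZmaxLog P x} ≤ ENNReal.ofReal (Fintype.card A * Real.exp (-t)) := by
  refine (measure_mono_ae ?_).trans
    ((measure_exists_atomCyl_lt_le P (.ofReal (Real.exp (-t)))).trans_eq ?_)
  · filter_upwards [ae_forall_measure_atomCyl_pos P] with x hpos hx
    obtain ⟨n, hn⟩ := exists_lt_of_lt_ciSup hx
    have hZ : 0 < Zf P (n + 1) x := by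
      have : 1 < Zf P (n + 1) x := (Real.log_pos_iff (by rw [Zf]; positivity)).1 (ht.trans_lt hn)
      linarith
    exact ⟨n, measure_atomCyl_lt_of_exp_lt_Zf (hpos _) ((Real.lt_log_iff_exp_lt hZ).1 hn)⟩
  · rw [ENNReal.ofReal_mul (Nat.cast_nonneg _), ENNReal.ofReal_natCast]

lemma measurable_ZmaxLog [Finite A] (P : Measure (ℕ → A)) : Measurable (ZmaxLog P) :=
  .iSup fun n => Real.measurable_log.comp (measurable_Zf P (n + 1))

lemma ZmaxLog_nonneg {P : Measure (ℕ → A)} {x : ℕ → A} (hx : ∀ n, 1 ≤ Zf P n x) :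
    0 ≤ ZmaxLog P x :=
  Real.iSup_nonneg fun n => Real.log_nonneg (hx (n + 1))

lemma ae_one_le_Zf [Finite A] {P : Measure (ℕ → A)} [IsFiniteMeasure P]
    (hinv : MeasurePreserving shift P P) : ∀ᵐ x ∂P, ∀ n, 1 ≤ Zf P n x := by
  filter_upwards [ae_forall_measure_atomCyl_pos P] with x hx n
  exact one_le_Zf hinv (hx n)

theorem integrable_ZmaxLog [Fintype A] {P : Measure (ℕ → A)} [IsProbabilityMeasure P]
    (hinv : MeasurePreserving shift P P) : Integrable (ZmaxLog P) P := by
  have hnn : 0 ≤ᵐ[P] ZmaxLog P := (ae_one_le_Zf hinv).mono fun x hx => ZmaxLog_nonneg hx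
  refine ⟨(measurable_ZmaxLog P).aestronglyMeasurable, ?_⟩
  rw [hasFiniteIntegral_iff_ofReal hnn,
    lintegral_eq_lintegral_meas_lt P hnn (measurable_ZmaxLog P).aemeasurable]
  have hexp : IntegrableOn (fun t => Real.exp (-t)) (Ioi 0) := by
    simpa using exp_neg_integrableOn_Ioi 0 one_pos
  calc ∫⁻ t in Ioi 0, P {x | t < ZmaxLog P x}
      ≤ ∫⁻ t in Ioi 0, ENNReal.ofReal (Fintype.card A * Real.exp (-t)) :=
        setLIntegral_mono (by fun_prop) fun t ht => measure_lt_ZmaxLog_le P (le_of_lt ht)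
    _ < ⊤ := (hasFiniteIntegral_iff_ofReal (.of_forall fun t => by positivity)).1
      (hexp.const_mul (Fintype.card A : ℝ)).2

lemma ae_tendsto_log_Zf_and_mem_Icc [Fintype A] {P : Measure (ℕ → A)} [IsProbabilityMeasure P]
    (hinv : MeasurePreserving shift P P) {ZL : (ℕ → A) → ℝ}
    (hZL : ∀ᵐ x ∂P, Tendsto (fun n => Zf P (n + 1) x) atTop (𝓝 (ZL x))) :
    ∀ᵐ x ∂P, Tendsto (fun n => Real.log (Zf P n x)) atTop (𝓝 (Real.log (ZL x))) ∧
      ∀ n, Real.log (Zf P n x) ∈ Icc 0 (ZmaxLog P x) := by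
  filter_upwards [ae_one_le_Zf hinv, hZL] with x hone hlim
  have hZL1 : 1 ≤ ZL x := ge_of_tendsto' hlim fun n => hone (n + 1)
  have hlog := (Real.continuousAt_log (by positivity)).tendsto.comp hlim
  have hle (n : ℕ) : Real.log (Zf P (n + 1) x) ≤ ZmaxLog P x := le_ciSup hlog.bddAbove_range n
  refine ⟨(tendsto_add_atTop_iff_nat 1).1 hlog, fun n => ⟨Real.log_nonneg (hone n), ?_⟩⟩
  rcases n with _ | n
  · simpa [Zf_zero] using ZmaxLog_nonneg hone
  · exact hle n

lemma measurable_psi [Finite A] (P : Measure (ℕ → A)) (m M : ℕ) : Measurable (psi P m M) :=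
  .iSup fun k => ((Real.measurable_log.comp (measurable_Zf P k.val)).sub
    (Real.measurable_log.comp (measurable_Zf P M))).abs

lemma norm_psi_le_ZmaxLog {P : Measure (ℕ → A)} {x : ℕ → A}
    (hx : ∀ n, Real.log (Zf P n x) ∈ Icc 0 (ZmaxLog P x)) (m M : ℕ) :
    ‖psi P m M x‖ ≤ ZmaxLog P x := by
  have : Nonempty {k // m ≤ k} := ⟨⟨m, le_rfl⟩⟩
  rw [psi, Real.norm_of_nonneg (Real.iSup_nonneg fun _ => abs_nonneg _)]
  exact ciSup_le fun k => abs_sub_le_of_nonneg_of_le (hx k).1 (hx k).2 (hx M).1 (hx M).2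

lemma tendsto_iSup_ge_of_tendsto {u : ℕ → ℝ} {l : ℝ} (hu : Tendsto u atTop (𝓝 l)) :
    Tendsto (fun m => ⨆ k : {k // m ≤ k}, u k.1) atTop (𝓝 l) := by
  rw [Metric.tendsto_atTop] at hu ⊢
  intro ε hε
  obtain ⟨N, hN⟩ := hu (ε / 2) (half_pos hε)
  refine ⟨N, fun m hm => ?_⟩
  have hu_le (k : {k // m ≤ k}) : u k.1 ≤ l + ε / 2 := by
    have := hN k (hm.trans k.2)
    rw [Real.dist_eq, abs_lt] at this
    linarith
  have : Nonempty {k // m ≤ k} := ⟨⟨m, le_rfl⟩⟩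
  have hsup_le : ⨆ k : {k // m ≤ k}, u k.1 ≤ l + ε / 2 := ciSup_le hu_le
  have hle_sup : u m ≤ ⨆ k : {k // m ≤ k}, u k.1 :=
    le_ciSup (f := fun k : {k // m ≤ k} => u k.1) ⟨_, forall_mem_range.2 hu_le⟩ ⟨m, le_rfl⟩
  have hum := hN m hm
  rw [Real.dist_eq, abs_lt] at hum ⊢
  constructor <;> linarith

lemma tendsto_integral_sum_comp_iterate_div {α : Type*} [MeasurableSpace α] {μ : Measure α}
    {T : α → α} (hT : MeasurePreserving T μ μ) {g : α → ℝ} (hg : Integrable g μ) :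
    Tendsto (fun N : ℕ => ∫ x, (∑ k ∈ Finset.range N, g (T^[k] x)) / N ∂μ) atTop
      (𝓝 (∫ x, g x ∂μ)) := by
  have hint (k : ℕ) : Integrable (fun x => g (T^[k] x)) μ :=
    (hT.iterate k).integrable_comp_of_integrable hg
  have hk (k : ℕ) : ∫ x, g (T^[k] x) ∂μ = ∫ x, g x ∂μ := by
    rw [← integral_map (hT.iterate k).measurable.aemeasurable
      (by rw [(hT.iterate k).map_eq]; exact hg.aestronglyMeasurable), (hT.iterate k).map_eq]
  refine tendsto_const_nhds.congr' ((eventually_ne_atTop 0).mono fun N hN => Eq.symm ?_)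
  beta_reduce
  rw [integral_div, integral_finsetSum _ fun k _ => hint k, Finset.sum_congr rfl fun k _ => hk k,
    Finset.sum_const, Finset.card_range, nsmul_eq_mul,
    mul_div_cancel_left₀ _ (Nat.cast_ne_zero.2 hN)]

theorem stmt9 [Fintype A] (P : Measure (ℕ → A)) [IsProbabilityMeasure P]
    (hinv : MeasurePreserving (shift : (ℕ → A) → (ℕ → A)) P P)
    (ZL : (ℕ → A) → ℝ)
    (hZL : ∀ᵐ x ∂P, Tendsto (fun n : ℕ => Zf P (n + 1) x) atTop (nhds (ZL x))) :
    (∀ m M : ℕ, 1 ≤ M → M ≤ m →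
      Tendsto (fun N : ℕ => ∫ x, (∑ k ∈ Finset.range N, psi P m M (shift^[k] x)) / N ∂P)
        atTop (nhds (∫ x, psi P m M x ∂P))) ∧
    (∀ M : ℕ, 1 ≤ M →
      Tendsto (fun m : ℕ => ∫ x, psi P m M x ∂P) atTop
        (nhds (∫ x, |Real.log (ZL x) - Real.log (Zf P M x)| ∂P))) ∧
    Tendsto (fun M : ℕ => ∫ x, |Real.log (ZL x) - Real.log (Zf P M x)| ∂P)
      atTop (nhds 0) := by
  have hgood := ae_tendsto_log_Zf_and_mem_Icc hinv hZL
  have hZmax := integrable_ZmaxLog hinv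
  have hpsi (m M : ℕ) : ∀ᵐ x ∂P, ‖psi P m M x‖ ≤ ZmaxLog P x :=
    hgood.mono fun x hx => norm_psi_le_ZmaxLog hx.2 m M
  have hlogZL : AEStronglyMeasurable (fun x => Real.log (ZL x)) P :=
    (Real.measurable_log.comp_aemeasurable (aemeasurable_of_tendsto_metrizable_ae atTop
      (fun n => (measurable_Zf P (n + 1)).aemeasurable) hZL)).aestronglyMeasurable
  refine ⟨fun m M _ _ => tendsto_integral_sum_comp_iterate_div hinv
      (hZmax.mono' (measurable_psi P m M).aestronglyMeasurable (hpsi m M)),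
    fun M _ => tendsto_integral_of_dominated_convergence (ZmaxLog P)
      (fun m => (measurable_psi P m M).aestronglyMeasurable) hZmax (hpsi · M)
      (hgood.mono fun x hx => tendsto_iSup_ge_of_tendsto (hx.1.sub_const _).abs), ?_⟩
  have hdiff (M : ℕ) : ∀ᵐ x ∂P, ‖|Real.log (ZL x) - Real.log (Zf P M x)|‖ ≤ ZmaxLog P x := by
    filter_upwards [hgood] with x hx
    have hZL := isClosed_Icc.mem_of_tendsto hx.1 (.of_forall hx.2)
    rw [Real.norm_eq_abs, abs_abs]
    exact abs_sub_le_of_nonneg_of_le hZL.1 hZL.2 (hx.2 M).1 (hx.2 M).2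
  simpa using tendsto_integral_of_dominated_convergence (f := fun _ => 0) (ZmaxLog P)
    (fun M => (hlogZL.sub (Real.measurable_log.comp (measurable_Zf P M)).aestronglyMeasurable).norm)
    hZmax hdiff (hgood.mono fun x hx => by
      simpa using (tendsto_const_nhds (x := Real.log (ZL x))).sub hx.1 |>.abs)
end
end
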